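/- arXiv:0811.2625 — 8 statements merged into one kernel-verified Lean document; each statement's English description precedes it below -/
import Mathlib

section
/- The number of proper q-colorings of the Turán graph T_{q-1}(n) (the complete (q-1)-partite graph on n vertices with parts as equal as possible) equals q! · ((q-1+r)·2^(s-1) - q + 2), where s and r are the unique integers with n = s(q-1) + r and 0 ≤ r < q-1. -/
/-!
With `k = q - 1` parts and `q` colours, the colour sets of the parts are nonempty and pairwise
disjoint, so at most one part uses two colours. Fix a base vertex `b i` in each part `i`. A proper
colouring `f` is then determined by the injection `f ∘ b` of parts into colours together with the
set `S` of vertices receiving the unique colour `m` that `f ∘ b` misses: every vertex outside `S`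
has the colour of the base vertex of its part, and `S` is a set of non-base vertices inside a
single part. Conversely every such pair is a proper colouring, so the count is
`q! * (1 + ∑ᵢ (2 ^ (|Pᵢ| - 1) - 1))`. In `T_k(n)` there are `r` parts of size `s + 1` and `k - r`
of size `s`.
-/

open Finset Function

theorem Function.Injective.existsUnique_notMem_range {ι α : Type*} [Fintype ι] [Fintype α]
    {g : ι → α} (hg : Injective g) (hcard : Fintype.card α = Fintype.card ι + 1) :
    ∃! c, c ∉ Set.range g := by
  classical
  have : #(univ.image g)ᶜ = 1 := by
    rw [card_compl, card_image_of_injective _ hg, card_univ]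
    omega
  obtain ⟨m, hm⟩ := card_eq_one.mp this
  have hcompl (c : α) : c ∉ Set.range g ↔ c = m := by
    rw [← mem_singleton, ← hm]
    simp
  exact ⟨m, (hcompl m).mpr rfl, fun c => (hcompl c).mp⟩

theorem card_powerset_filter_within_fiber {V ι : Type*} [Fintype ι] [DecidableEq ι]
    (π : V → ι) (U : Finset V) :
    #{S ∈ U.powerset | ∀ v ∈ S, ∀ w ∈ S, π v = π w} =
      1 + ∑ i, (2 ^ #{v ∈ U | π v = i} - 1) := by
  let _ : DecidableEq V := Classical.decEq V
  have hsplit : {S ∈ U.powerset | ∀ v ∈ S, ∀ w ∈ S, π v = π w} =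
      insert ∅ (univ.biUnion fun i => {v ∈ U | π v = i}.powerset.erase ∅) := by
    ext S
    simp only [mem_filter, mem_powerset, mem_insert, mem_biUnion, mem_univ, true_and, mem_erase,
      subset_iff]
    constructor
    · rintro ⟨hSU, hS⟩
      obtain rfl | ⟨v, hv⟩ := S.eq_empty_or_nonempty
      · exact .inl rfl
      · exact .inr ⟨π v, ne_empty_of_mem hv, fun w hw => ⟨hSU hw, hS w hw v hv⟩⟩
    · rintro (rfl | ⟨i, -, hS⟩)
      · simp
      · exact ⟨fun v hv => (hS hv).1, fun v hv w hw => (hS hv).2.trans (hS hw).2.symm⟩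
  have hdisj : (Set.univ : Set ι).PairwiseDisjoint
      fun i => {v ∈ U | π v = i}.powerset.erase ∅ := by
    intro i _ j _ hij
    refine disjoint_left.mpr fun S hSi hSj => ?_
    simp only [mem_erase, mem_powerset] at hSi hSj
    obtain ⟨v, hv⟩ := nonempty_iff_ne_empty.mpr hSi.1
    exact hij ((mem_filter.mp (hSi.2 hv)).2.symm.trans (mem_filter.mp (hSj.2 hv)).2)
  rw [hsplit, card_insert_of_notMem (by simp), card_biUnion (by simpa using hdisj), add_comm]
  simp [card_erase_of_mem, card_powerset]

section Colorings

variable {V ι α : Type*} [Fintype V] [Fintype ι] [Fintype α] [DecidableEq ι]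

theorem card_colorings_extending_eq [DecidableEq V] [DecidableEq α] (π : V → ι) {b : ι → V}
    (hb : ∀ i, π (b i) = i) {g : ι → α} (hg : Injective g) {m : α} (hm : m ∉ Set.range g)
    (hm_unique : ∀ c ∉ Set.range g, c = m) :
    #{f : V → α | (∀ v w, π v ≠ π w → f v ≠ f w) ∧ f ∘ b = g} =
      #{S ∈ ({v | v ≠ b (π v)} : Finset V).powerset | ∀ v ∈ S, ∀ w ∈ S, π v = π w} := by
  have hgm (i : ι) : g i ≠ m := fun h => hm ⟨i, h⟩
  refine card_nbij' (fun f => ({v | f v = m} : Finset V))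
    (fun S v => if v ∈ S then m else g (π v)) ?_ ?_ ?_ ?_
  · intro f hf
    obtain ⟨-, hproper, rfl⟩ := mem_filter.mp hf
    simp only [coe_filter, mem_powerset, subset_iff, mem_filter, mem_univ, true_and,
      Set.mem_ofPred_eq]
    refine ⟨fun v hv hvb => hgm (π v) ?_, fun v hv w hw => ?_⟩
    · rw [comp_apply, ← hvb, hv]
    · by_contra h
      exact hproper v w h (hv.trans hw.symm)
  · intro S hS
    simp only [coe_filter, mem_powerset, subset_iff, mem_filter, mem_univ, true_and] at hS ⊢
    refine ⟨fun v w hvw => ?_, funext fun i => ?_⟩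
    · by_cases hv : v ∈ S <;> by_cases hw : w ∈ S <;> simp only [hv, hw, if_true, if_false]
      · exact absurd (hS.2 v hv w hw) hvw
      · exact (hgm _).symm
      · exact hgm _
      · exact hg.ne hvw
    · have : b i ∉ S := fun h => hS.1 h (by rw [hb])
      simp [this, hb]
  · intro f hf
    obtain ⟨-, hproper, rfl⟩ := mem_filter.mp hf
    funext v
    simp only [mem_filter, mem_univ, true_and]
    split_ifs with hv
    · exact hv.symm
    · obtain ⟨i, hi⟩ : f v ∈ Set.range (f ∘ b) := by_contra fun h => hv (hm_unique _ h)
      have : i = π v := by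
        by_contra hne
        exact hproper (b i) v (by rwa [hb]) hi
      rw [← hi, this, comp_apply]
  · intro S hS
    ext v
    by_cases hv : v ∈ S <;> simp [hv, hgm]

theorem card_colorings_of_card_eq_card_add_one (π : V → ι) (hπ : Surjective π)
    (hcard : Fintype.card α = Fintype.card ι + 1) :
    Nat.card {f : V → α // ∀ v w, π v ≠ π w → f v ≠ f w} =
      (Fintype.card α).factorial * (1 + ∑ i, (2 ^ (#{v | π v = i} - 1) - 1)) := by
  classical
  obtain ⟨b, hb⟩ := hπ.hasRightInverse
  have hinj : #{g : ι → α | Injective g} = (Fintype.card α).factorial := by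
    rw [← Fintype.card_subtype, Fintype.card_congr (Equiv.subtypeInjectiveEquivEmbedding ι α),
      Fintype.card_embedding_eq,
      ← Nat.factorial_mul_descFactorial (by omega : Fintype.card ι ≤ Fintype.card α), hcard,
      Nat.add_sub_cancel_left, Nat.factorial_one, one_mul]
  have hpart (i : ι) : #{v ∈ ({v | v ≠ b (π v)} : Finset V) | π v = i} = #{v | π v = i} - 1 := by
    rw [filter_filter, ← card_erase_of_mem (s := {v | π v = i}) (a := b i) (by simp [hb i])]
    congr 1
    ext v
    simp only [mem_filter, mem_univ, true_and, mem_erase]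
    constructor <;> rintro ⟨h, rfl⟩ <;> exact ⟨h, rfl⟩
  have hcomp : Set.MapsTo (fun f => f ∘ b)
      (({f | ∀ v w, π v ≠ π w → f v ≠ f w} : Finset (V → α)) : Set (V → α))
      (({g | Injective g} : Finset (ι → α)) : Set (ι → α)) := by
    intro f hf
    refine mem_filter.mpr ⟨mem_univ _, fun i j hij => ?_⟩
    by_contra hne
    exact (mem_filter.mp hf).2 (b i) (b j) (by rwa [hb i, hb j]) hij
  have hfibre (g : ι → α) (hg : g ∈ ({g | Injective g} : Finset (ι → α))) :
      #{f ∈ ({f | ∀ v w, π v ≠ π w → f v ≠ f w} : Finset (V → α)) | f ∘ b = g} =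
        1 + ∑ i, (2 ^ (#{v | π v = i} - 1) - 1) := by
    obtain ⟨m, hm, hm_unique⟩ := (mem_filter.mp hg).2.existsUnique_notMem_range hcard
    simp_rw [filter_filter, card_colorings_extending_eq π hb (mem_filter.mp hg).2 hm hm_unique,
      ← hpart]
    convert card_powerset_filter_within_fiber π _
  rw [Nat.card_eq_fintype_card, Fintype.card_subtype, card_eq_sum_card_fiberwise hcomp,
    sum_congr rfl hfibre, sum_const, hinj, smul_eq_mul]

end Colorings

theorem Fin.card_filter_val_eq_count (p : ℕ → Prop) [DecidablePred p] (n : ℕ) :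
    #{v : Fin n | p v} = Nat.count p n := by
  rw [card_filter, Fin.sum_univ_eq_sum_range (fun x => if p x then 1 else 0), ← card_filter,
    Nat.count_eq_card_filter_range]

theorem Fin.card_filter_val_mod_eq {k : ℕ} (hk : 0 < k) (n : ℕ) {i : ℕ} (hi : i < k) :
    #{v : Fin n | (v : ℕ) % k = i} = n / k + if i < n % k then 1 else 0 := by
  have hmod : #{v : Fin n | (v : ℕ) % k = i} = #{v : Fin n | (v : ℕ) ≡ i [MOD k]} := by
    simp only [Nat.ModEq, Nat.mod_eq_of_lt hi]
  rw [hmod, Fin.card_filter_val_eq_count (· ≡ i [MOD k]), Nat.count_modEq_card n hk,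
    Nat.mod_eq_of_lt hi]

theorem one_add_sum_two_pow_sub_one_eq {k s r : ℕ} (hs : 1 ≤ s) (hr : r ≤ k) :
    ((1 + ∑ i : Fin k, (2 ^ (s + (if (i : ℕ) < r then 1 else 0) - 1) - 1) : ℕ) : ℤ) =
      ((k : ℤ) + r) * 2 ^ (s - 1) - k + 1 := by
  obtain ⟨t, rfl⟩ := Nat.exists_eq_add_of_le' hs
  have hterm (i : Fin k) : ((2 ^ (t + 1 + (if (i : ℕ) < r then 1 else 0) - 1) - 1 : ℕ) : ℤ) =
      2 ^ t * (if (i : ℕ) < r then 2 else 1) - 1 := by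
    split_ifs <;> push_cast [Nat.one_le_two_pow] <;> ring_nf
  have hlt : #{i : Fin k | (i : ℕ) < r} = r := by rw [Fin.card_filter_val_lt, min_eq_right hr]
  have hge : #{i : Fin k | ¬(i : ℕ) < r} = k - r := by
    have := card_filter_add_card_filter_not (s := univ) fun i : Fin k => (i : ℕ) < r
    rw [hlt, card_univ, Fintype.card_fin] at this
    omega
  push_cast
  rw [sum_congr rfl fun i _ => hterm i, sum_sub_distrib, ← mul_sum, sum_ite, sum_const, sum_const,
    hlt, hge, sum_const, card_univ, Fintype.card_fin]
  push_cast [nsmul_eq_mul, Nat.cast_sub hr]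
  ring

theorem turan_graph_coloring_count_general (q n s r : ℕ) (hs : 1 ≤ s)
    (hr : r < q - 1) (hn : n = s * (q - 1) + r) :
    (Fintype.card {f : Fin n → Fin q //
        ∀ v w, (SimpleGraph.turanGraph n (q - 1)).Adj v w → f v ≠ f w} : ℤ) =
      (q.factorial : ℤ) * (((q : ℤ) - 1 + r) * 2 ^ (s - 1) - q + 2) := by
  obtain ⟨k, rfl⟩ : ∃ k, q = k + 1 := ⟨q - 1, by omega⟩
  rw [Nat.add_sub_cancel] at hr hn ⊢
  have hk : 0 < k := by omega
  let π : Fin n → Fin k := fun v => ⟨v % k, Nat.mod_lt _ hk⟩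
  have hπ : Surjective π := fun i =>
    ⟨⟨i, i.2.trans_le (by rw [hn]; nlinarith)⟩, Fin.ext (Nat.mod_eq_of_lt i.2)⟩
  have hdiv : n / k = s ∧ n % k = r := by
    rw [hn, add_comm, Nat.add_mul_div_right _ _ hk, Nat.div_eq_of_lt hr, zero_add,
      Nat.add_mul_mod_self_right, Nat.mod_eq_of_lt hr]
    exact ⟨rfl, rfl⟩
  have hpart (i : Fin k) : #{v | π v = i} = s + if (i : ℕ) < r then 1 else 0 := by
    simp only [π, Fin.ext_iff]
    rw [Fin.card_filter_val_mod_eq hk n i.2, hdiv.1, hdiv.2]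
  have hadj (f : Fin n → Fin (k + 1)) :
      (∀ v w, (SimpleGraph.turanGraph n k).Adj v w → f v ≠ f w) ↔
        ∀ v w, π v ≠ π w → f v ≠ f w := by
    simp only [SimpleGraph.turanGraph_adj, π, ne_eq, Fin.ext_iff]
  rw [Fintype.card_eq_nat_card, Nat.card_congr (Equiv.subtypeEquivRight hadj),
    card_colorings_of_card_eq_card_add_one π hπ (by simp), Nat.cast_mul]
  simp_rw [hpart]
  rw [one_add_sum_two_pow_sub_one_eq hs hr.le, Fintype.card_fin]
  push_cast
  ring

/-- The number of proper `q`-colorings of the Turán graph `T_{q-1}(n)` equals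
`q! * ((q-1+r) * 2^(s-1) - q + 2)`, where `n = s*(q-1) + r` with `0 ≤ r < q-1`. -/
theorem turan_graph_coloring_count (q n s r : ℕ) (hq : 2 ≤ q) (hs : 1 ≤ s)
    (hr : r < q - 1) (hn : n = s * (q - 1) + r) :
    (Fintype.card {f : Fin n → Fin q //
        ∀ v w, (SimpleGraph.turanGraph n (q - 1)).Adj v w → f v ≠ f w} : ℤ) =
      (q.factorial : ℤ) * (((q : ℤ) - 1 + r) * 2 ^ (s - 1) - q + 2) :=
  turan_graph_coloring_count_general q n s r hs hr hn
end

section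
/- Any bipartite graph on n vertices with t ≥ 1 edges has at most n - 2√t + 1 connected components. -/
/-!
Each component `K` of a bipartite graph with sides of sizes `a_K ≥ b_K` has at most `a_K b_K`
edges. Since every `a_K ≥ 1`, each `a_K` is at most `A = ∑ (a_K - 1) + 1`, so there are at most
`A · B` edges in all, where `B = ∑ b_K`. This is the count for a single complete bipartite
component with sides `A` and `B`, and `A + B = n - c + 1`; by AM-GM, `4t ≤ (n - c + 1)²`.
-/

open Finset

theorem sum_mul_le_sum_sub_one_add_one_mul_sum {ι : Type*} (s : Finset ι) (a b : ι → ℕ)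
    (ha : ∀ i ∈ s, 1 ≤ a i) :
    ∑ i ∈ s, a i * b i ≤ (∑ i ∈ s, (a i - 1) + 1) * ∑ i ∈ s, b i := by
  rw [mul_sum]
  refine sum_le_sum fun i hi ↦ Nat.mul_le_mul_right _ ?_
  have := single_le_sum (f := fun j ↦ a j - 1) (fun _ _ ↦ Nat.zero_le _) hi
  have := ha i hi
  omega

theorem four_mul_sum_mul_le_sq {ι : Type*} (s : Finset ι) (a b : ι → ℕ)
    (hab : ∀ i ∈ s, 1 ≤ a i + b i) :
    4 * ∑ i ∈ s, a i * b i ≤ (∑ i ∈ s, (a i + b i - 1) + 1) ^ 2 := by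
  set A := ∑ i ∈ s, (max (a i) (b i) - 1) + 1
  set B := ∑ i ∈ s, min (a i) (b i)
  have hAB : ∑ i ∈ s, (a i + b i - 1) + 1 = A + B := by
    rw [add_right_comm, ← sum_add_distrib]
    congr 1
    refine sum_congr rfl fun i hi ↦ ?_
    have := hab i hi
    omega
  calc 4 * ∑ i ∈ s, a i * b i = 4 * ∑ i ∈ s, max (a i) (b i) * min (a i) (b i) := by
        simp only [max_mul_min]
    _ ≤ 4 * (A * B) := Nat.mul_le_mul_left 4 <|
        sum_mul_le_sum_sub_one_add_one_mul_sum s _ _ fun i hi ↦ by have := hab i hi; omega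
    _ ≤ (A + B) ^ 2 := by rw [← mul_assoc]; exact four_mul_le_sq_add A B
    _ = _ := by rw [hAB]

theorem two_mul_sqrt_le_of_four_mul_le_sq {x y : ℝ} (hx : 0 ≤ x) (hy : 0 ≤ y)
    (h : 4 * x ≤ y ^ 2) : 2 * √x ≤ y := by
  rw [show 4 * x = (2 * √x) ^ 2 by rw [mul_pow, Real.sq_sqrt hx]; norm_num] at h
  exact le_of_pow_le_pow_left₀ two_ne_zero hy h

namespace SimpleGraph

variable {V : Type*} [Fintype V] {G : SimpleGraph V}

theorem Colorable.exists_isBipartiteWith_compl [DecidableEq V] (h : G.Colorable 2) :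
    ∃ s : Finset V, G.IsBipartiteWith s ↑sᶜ := by
  obtain ⟨col⟩ := h
  refine ⟨({v | col v = 0} : Finset V), by rw [coe_compl]; exact disjoint_compl_right,
    fun v w hvw ↦ ?_⟩
  have := col.valid hvw
  simp only [coe_filter, coe_compl, Set.mem_ofPred_eq, Set.mem_compl_iff, mem_univ, true_and]
  omega

variable [DecidableEq G.ConnectedComponent]

theorem card_filter_connectedComponentMk_pos (K : G.ConnectedComponent) :
    0 < #{v | G.connectedComponentMk v = K} := by
  obtain ⟨v, hv⟩ := K.exists_rep
  exact card_pos.mpr ⟨v, mem_filter.mpr ⟨mem_univ v, hv⟩⟩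

variable [DecidableEq V] [DecidableRel G.Adj]

theorem card_edgeFinset_le_sum_card_mul_card {s t : Finset V} (h : G.IsBipartiteWith s t) :
    #G.edgeFinset ≤ ∑ K : G.ConnectedComponent,
      #{v ∈ s | G.connectedComponentMk v = K} * #{v ∈ t | G.connectedComponentMk v = K} := by
  rw [← isBipartiteWith_sum_degrees_eq_card_edges h, ← sum_fiberwise s G.connectedComponentMk]
  refine sum_le_sum fun K _ ↦ ?_
  rw [← smul_eq_mul, ← sum_const]
  refine sum_le_sum fun v hv ↦ ?_
  rw [mem_filter] at hv
  rw [← card_neighborFinset_eq_degree, ← hv.2]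
  refine card_le_card fun w hw ↦
    mem_filter.mpr ⟨isBipartiteWith_neighborFinset_subset h hv.1 hw, ?_⟩
  exact (ConnectedComponent.eq.mpr ((mem_neighborFinset _ _ _).mp hw).reachable).symm

theorem sum_card_filter_connectedComponentMk_sub_one_add_card :
    ∑ K : G.ConnectedComponent, (#{v | G.connectedComponentMk v = K} - 1) +
      Fintype.card G.ConnectedComponent = Fintype.card V := by
  rw [Fintype.card_eq_sum_ones, ← sum_add_distrib, ← card_univ,
    card_eq_sum_card_fiberwise (f := G.connectedComponentMk) fun v _ ↦ mem_univ _]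
  exact sum_congr rfl fun K _ ↦ Nat.sub_add_cancel (card_filter_connectedComponentMk_pos K)

end SimpleGraph

open SimpleGraph in
theorem bipartite_component_bound_general (V : Type*) [Fintype V] [DecidableEq V]
    (G : SimpleGraph V) [DecidableRel G.Adj] (n t : ℕ) (hbip : G.Colorable 2)
    (hn : Fintype.card V = n) (ht : G.edgeFinset.card = t) :
    (Fintype.card G.ConnectedComponent : ℝ) ≤ (n : ℝ) - 2 * Real.sqrt t + 1 := by
  classical
  obtain ⟨s, hs⟩ := hbip.exists_isBipartiteWith_compl
  set a := fun K ↦ #{v ∈ s | G.connectedComponentMk v = K}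
  set b := fun K ↦ #{v ∈ sᶜ | G.connectedComponentMk v = K}
  have hab (K : G.ConnectedComponent) : a K + b K = #{v | G.connectedComponentMk v = K} := by
    rw [← card_union_of_disjoint (disjoint_filter_filter disjoint_compl_right), ← filter_union,
      union_compl]
  have h4t : 4 * t ≤ (∑ K, (a K + b K - 1) + 1) ^ 2 :=
    ht ▸ (Nat.mul_le_mul_left 4 (card_edgeFinset_le_sum_card_mul_card hs)).trans
      (four_mul_sum_mul_le_sq _ a b fun K _ ↦ hab K ▸ card_filter_connectedComponentMk_pos K)
  have hcount : ((∑ K, (a K + b K - 1) + 1 : ℕ) : ℝ) =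
      n - Fintype.card G.ConnectedComponent + 1 := by
    have := G.sum_card_filter_connectedComponentMk_sub_one_add_card
    simp only [← hab] at this
    rw [← hn, ← this]
    push_cast
    ring
  have := two_mul_sqrt_le_of_four_mul_le_sq (Nat.cast_nonneg t) (Nat.cast_nonneg _)
    (by exact_mod_cast h4t)
  linarith

/-- Any bipartite graph on `n` vertices with `t ≥ 1` edges has at most `n - 2√t + 1`
connected components. -/
theorem bipartite_component_bound (V : Type*) [Fintype V] [DecidableEq V]
    (G : SimpleGraph V) [DecidableRel G.Adj] (n t : ℕ) (hbip : G.Colorable 2)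
    (hn : Fintype.card V = n) (ht : G.edgeFinset.card = t) (ht1 : 1 ≤ t) :
    (Fintype.card G.ConnectedComponent : ℝ) ≤ (n : ℝ) - 2 * Real.sqrt t + 1 :=
  bipartite_component_bound_general V G n t hbip hn ht
end

section
/- Let F be the graph obtained from the complete bipartite graph K_{a,b} by deleting a star of r edges all incident to a single vertex of the b-side, where r < a ≤ b and a ≥ 2, b ≥ 2. Then the number of proper 3-colorings of F equals 3·2^a + 3·2^b + 6·(2^r - 2). -/
/-- The complete bipartite graph `K_{a,b}` (with sides `Fin a` and `Fin b`) minus a star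
of `r` edges, all joining the vertex `0` of the `b`-side to the first `r` vertices of the
`a`-side. -/
def starRemovedBipartite (a b r : ℕ) : SimpleGraph (Fin a ⊕ Fin b) where
  Adj x y := ∃ (i : Fin a) (j : Fin b),
    ((x = Sum.inl i ∧ y = Sum.inr j) ∨ (x = Sum.inr j ∧ y = Sum.inl i)) ∧
      ¬((j : ℕ) = 0 ∧ (i : ℕ) < r)
  symm := by
    constructor
    rintro x y ⟨i, j, h, hn⟩
    exact ⟨i, j, by tauto, hn⟩
  loopless := by
    constructor
    rintro x ⟨i, j, h, hn⟩
    rcases h with ⟨h1, h2⟩ | ⟨h1, h2⟩ <;> simp_all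

instance (a b r : ℕ) : DecidableRel (starRemovedBipartite a b r).Adj := fun _ _ =>
  Fintype.decidableExistsFintype

/-! Colour the `a`-side first, by `g`, and let `v_g` and `u_g` be the numbers of colours that `g`
misses on the tail `T = {i | r ≤ i}` and on the whole side. Vertex `0` of the `b`-side sees only
`T`, the other `b - 1` vertices see everything, so the count is `∑_g v_g * u_g ^ (b - 1)`, with
`u_g ≤ v_g ≤ 2`. On `{0, 1, 2}`, `u ^ n = u + [u = 2] (2 ^ n - 2)`, and `u_g = 2` only for the
three constant `g`. The remaining sum `∑_g v_g * u_g` counts triples `(g, c, d)` with `c ∉ g(T)`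
and `d ∉ g(univ)`; counting them by `(c, d)` instead gives `3 * 2 ^ a + 6 * 2 ^ r`. -/

open Finset

section BipartiteColorings

variable {α β γ : Type*} [Fintype α] [Fintype β] [Fintype γ]
  [DecidableEq α] [DecidableEq β] [DecidableEq γ]

theorem Fintype.card_subtype_forall_mem (t : β → Finset γ) :
    Fintype.card {h : β → γ // ∀ j, h j ∈ t j} = ∏ j, #(t j) := by
  rw [Fintype.card_subtype, ← Fintype.card_piFinset]
  congr
  ext
  simp [Fintype.mem_piFinset]

theorem card_proper_colorings_of_bipartite (G : SimpleGraph (α ⊕ β)) [DecidableRel G.Adj]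
    (hl : ∀ i i', ¬G.Adj (.inl i) (.inl i')) (hr : ∀ j j', ¬G.Adj (.inr j) (.inr j')) :
    Fintype.card {f : α ⊕ β → γ // ∀ v w, G.Adj v w → f v ≠ f w} =
      ∑ g : α → γ, ∏ j, #(({i | G.Adj (.inl i) (.inr j)} : Finset α).image g)ᶜ := by
  let e : {f : α ⊕ β → γ // ∀ v w, G.Adj v w → f v ≠ f w} ≃
      Σ g : α → γ, {h : β → γ //
        ∀ j, h j ∈ (({i | G.Adj (.inl i) (.inr j)} : Finset α).image g)ᶜ} :=
    ((Equiv.sumArrowEquivProdArrow α β γ).subtypeEquiv fun f => by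
      simp only [Sum.forall, Equiv.sumArrowEquivProdArrow_apply_fst,
        Equiv.sumArrowEquivProdArrow_apply_snd, hl, hr, G.adj_comm (.inr _), mem_compl,
        mem_image, mem_filter, mem_univ, true_and, not_exists, not_and, IsEmpty.forall_iff,
        implies_true, and_true]
      exact ⟨fun h j i hij => h.1 i j hij,
        fun h => ⟨fun i j hij => h j i hij, fun j i hij => Ne.symm (h j i hij)⟩⟩).trans
      (Equiv.subtypeProdEquivSigmaSubtype fun (g : α → γ) (h : β → γ) =>
        ∀ j, h j ∈ (({i | G.Adj (.inl i) (.inr j)} : Finset α).image g)ᶜ)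
  rw [Fintype.card_congr e, Fintype.card_sigma]
  simp only [Fintype.card_subtype_forall_mem]

end BipartiteColorings

section MissedColors

variable {α γ : Type*} [Fintype α] [Fintype γ] [DecidableEq α] [DecidableEq γ]

theorem card_filter_mem_compl_image_and_mem_compl_image (s : Finset α) (c d : γ) :
    #{g : α → γ | c ∈ (s.image g)ᶜ ∧ d ∈ (univ.image g)ᶜ} =
      #({c, d}ᶜ : Finset γ) ^ #s * #({d}ᶜ : Finset γ) ^ (Fintype.card α - #s) := by
  have : ({g : α → γ | c ∈ (s.image g)ᶜ ∧ d ∈ (univ.image g)ᶜ} : Finset (α → γ)) =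
      Fintype.piFinset fun i => if i ∈ s then {c, d}ᶜ else {d}ᶜ := by
    ext g
    simp only [mem_filter, mem_univ, true_and, mem_compl, mem_image, Fintype.mem_piFinset,
      mem_ite, mem_insert, mem_singleton, not_or, forall_and]
    grind
  simp_rw [this, Fintype.card_piFinset, apply_ite card]
  rw [prod_ite, prod_const, prod_const, filter_univ_mem, filter_not, filter_univ_mem,
    ← compl_eq_univ_sdiff, card_compl s]

theorem sum_card_compl_image_mul_card_compl_image (s : Finset α) :
    ∑ g : α → γ, #(s.image g)ᶜ * #(univ.image g)ᶜ =
      ∑ c : γ, ∑ d : γ,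
        #({c, d}ᶜ : Finset γ) ^ #s * #({d}ᶜ : Finset γ) ^ (Fintype.card α - #s) := by
  have := sum_card_bipartiteAbove_eq_sum_card_bipartiteBelow (s := univ) (t := univ)
    (r := fun (g : α → γ) (p : γ × γ) => p ∈ (s.image g)ᶜ ×ˢ (univ.image g)ᶜ)
  simp only [bipartiteAbove, bipartiteBelow, filter_univ_mem] at this
  simp only [mem_product] at this
  simp_rw [← card_product, this, card_filter_mem_compl_image_and_mem_compl_image,
    ← Fintype.sum_prod_type']

theorem card_filter_card_image_eq_one [Nonempty α] :
    #{g : α → γ | #(univ.image g) = 1} = Fintype.card γ := by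
  have h_const (g : α → γ) (c : γ) : univ.image g = {c} ↔ Function.const α c = g := by
    refine ⟨fun h => funext fun x => ?_, fun h => h ▸ image_const univ_nonempty c⟩
    exact (mem_singleton.1 (h ▸ mem_image_of_mem g (mem_univ x))).symm
  have : ({g : α → γ | #(univ.image g) = 1} : Finset (α → γ)) =
      univ.map ⟨Function.const α, Function.const_injective⟩ := by
    ext g
    simp [card_eq_one, h_const]
  rw [this, card_map, card_univ]

end MissedColors

theorem Int.natCast_mul_pow_eq_of_le_two {u v n : ℕ} (huv : u ≤ v) (hv : v ≤ 2) (hn : n ≠ 0) :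
    (v * u ^ n : ℤ) = v * u + if u = 2 then 2 * (2 ^ n - 2) else 0 := by
  interval_cases v <;> interval_cases u <;> simp [hn]
  ring

theorem Fin.card_compl_le_two {t : Finset (Fin 3)} (ht : t.Nonempty) : #tᶜ ≤ 2 := by
  have := ht.card_pos
  rw [card_compl, Fintype.card_fin]
  omega

theorem Fin.card_compl_eq_two_iff (t : Finset (Fin 3)) : #tᶜ = 2 ↔ #t = 1 := by
  have := card_le_univ t
  rw [card_compl, Fintype.card_fin] at *
  omega

section ThreeColors

variable {α : Type*} [Fintype α] [DecidableEq α]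

theorem sum_card_compl_image_mul_card_compl_image_fin_three (s : Finset α) :
    ∑ g : α → Fin 3, #(s.image g)ᶜ * #(univ.image g)ᶜ =
      3 * 2 ^ Fintype.card α + 6 * 2 ^ (Fintype.card α - #s) := by
  have h_pair : ∀ c d : Fin 3, #({c, d}ᶜ : Finset (Fin 3)) = if c = d then 2 else 1 := by
    decide
  have h_single : ∀ d : Fin 3, #({d}ᶜ : Finset (Fin 3)) = 2 := by decide
  have h_split : 2 ^ #s * 2 ^ (Fintype.card α - #s) = 2 ^ Fintype.card α := by
    rw [← pow_add, Nat.add_sub_cancel' (card_le_univ s)]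
  simp only [sum_card_compl_image_mul_card_compl_image, Fin.sum_univ_three, h_pair, h_single,
    Fin.reduceEq, ↓reduceIte, one_pow, one_mul, h_split]
  ring

theorem sum_card_compl_image_mul_pow_card_compl_image {s : Finset α} (hs : s.Nonempty) {n : ℕ}
    (hn : n ≠ 0) :
    (∑ g : α → Fin 3, #(s.image g)ᶜ * #(univ.image g)ᶜ ^ n : ℤ) =
      3 * 2 ^ Fintype.card α + 6 * 2 ^ (Fintype.card α - #s) + 6 * (2 ^ n - 2) := by
  have : Nonempty α := hs.to_type
  calc (∑ g : α → Fin 3, #(s.image g)ᶜ * #(univ.image g)ᶜ ^ n : ℤ)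
      = ∑ g : α → Fin 3, ((#(s.image g)ᶜ * #(univ.image g)ᶜ : ℕ) +
          if #(univ.image g)ᶜ = 2 then 2 * (2 ^ n - 2) else 0 : ℤ) := by
        refine sum_congr rfl fun g _ => ?_
        push_cast
        exact Int.natCast_mul_pow_eq_of_le_two
          (card_le_card (compl_subset_compl.2 (image_subset_image (subset_univ s))))
          (Fin.card_compl_le_two (hs.image g)) hn
    _ = 3 * 2 ^ Fintype.card α + 6 * 2 ^ (Fintype.card α - #s) + 6 * (2 ^ n - 2) := by
        simp only [sum_add_distrib, ← Nat.cast_sum,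
          sum_card_compl_image_mul_card_compl_image_fin_three, sum_ite, sum_const_zero,
          sum_const, Fin.card_compl_eq_two_iff,
          card_filter_card_image_eq_one, Fintype.card_fin]
        push_cast
        ring

end ThreeColors

section StarRemovedBipartite

variable {a b r : ℕ}

theorem starRemovedBipartite_adj_inl_inr (i : Fin a) (j : Fin b) :
    (starRemovedBipartite a b r).Adj (.inl i) (.inr j) ↔ ¬((j : ℕ) = 0 ∧ (i : ℕ) < r) := by
  simp [starRemovedBipartite]

theorem starRemovedBipartite_not_adj_inl_inl (i i' : Fin a) :
    ¬(starRemovedBipartite a b r).Adj (.inl i) (.inl i') := by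
  simp [starRemovedBipartite]

theorem starRemovedBipartite_not_adj_inr_inr (j j' : Fin b) :
    ¬(starRemovedBipartite a b r).Adj (.inr j) (.inr j') := by
  simp [starRemovedBipartite]

end StarRemovedBipartite

theorem star_removed_three_coloring_count_general (a b r : ℕ) (hra : r < a) (hb : 2 ≤ b) :
    (Fintype.card {f : Fin a ⊕ Fin b → Fin 3 //
        ∀ v w, (starRemovedBipartite a b r).Adj v w → f v ≠ f w} : ℤ) =
      3 * 2 ^ a + 3 * 2 ^ b + 6 * (2 ^ r - 2) := by
  obtain ⟨n, rfl⟩ : ∃ n, b = n + 1 := ⟨b - 1, by omega⟩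
  set T : Finset (Fin a) := {i | ¬(i : ℕ) < r}
  have hT : #T = a - r := by
    simp only [T, filter_not, card_univ_sdiff, Fin.card_filter_val_lt, Fintype.card_fin]
    omega
  have h_nbhd_zero : ({i | (starRemovedBipartite a (n + 1) r).Adj (.inl i) (.inr 0)} :
      Finset (Fin a)) = T := by
    simp [T, starRemovedBipartite_adj_inl_inr]
  have h_nbhd_succ (j : Fin n) : ({i | (starRemovedBipartite a (n + 1) r).Adj (.inl i)
      (.inr j.succ)} : Finset (Fin a)) = univ := by
    simp [starRemovedBipartite_adj_inl_inr]
  rw [card_proper_colorings_of_bipartite _ starRemovedBipartite_not_adj_inl_inl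
    starRemovedBipartite_not_adj_inr_inr]
  simp only [Fin.prod_univ_succ, h_nbhd_zero, h_nbhd_succ, prod_const, card_univ,
    Fintype.card_fin]
  push_cast
  rw [sum_card_compl_image_mul_pow_card_compl_image ⟨⟨r, hra⟩, by simp [T]⟩ (by omega),
    Fintype.card_fin, hT, Nat.sub_sub_self hra.le]
  ring

/-- The number of proper 3-colorings of `K_{a,b}` minus an `r`-edge star centered at a
vertex of the `b`-side equals `3·2^a + 3·2^b + 6·(2^r - 2)`, provided
`1 ≤ r < a ≤ b` and `a, b ≥ 2`. -/
theorem star_removed_three_coloring_count (a b r : ℕ) (hr : 1 ≤ r) (hra : r < a)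
    (hab : a ≤ b) (ha : 2 ≤ a) (hb : 2 ≤ b) :
    (Fintype.card {f : Fin a ⊕ Fin b → Fin 3 //
        ∀ v w, (starRemovedBipartite a b r).Adj v w → f v ≠ f w} : ℤ) =
      3 * 2 ^ a + 3 * 2 ^ b + 6 * (2 ^ r - 2) :=
  star_removed_three_coloring_count_general a b r hra hb
end

section
/- Let a, b, t be positive integers with t ≥ 3 and b/a ≥ log t / log((t-1)/(t-2)). Then for every i ∈ {1, …, t-2}, the ratio (i^a·(t-i)^b) / ((i+1)^a·(t-i-1)^b) is at least 1.5^a. -/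
/-!
Write the ratio as `(i/(i+1))^a * ((t-i)/(t-i-1))^b`. The second factor is smallest at `i = 1`,
where the hypothesis on `b/a` says exactly that it is at least `t^a`; and `t * i/(i+1) ≥ 3/2`.
-/

open Real

lemma pow_le_pow_of_log_div_log_le {x y : ℝ} {a b : ℕ} (hx : 0 < x) (hy : 1 < y) (ha : 0 < a)
    (h : log x / log y ≤ b / a) : x ^ a ≤ y ^ b := by
  have hlogy : 0 < log y := log_pos hy
  have hlog : a * log x ≤ b * log y := by
    rw [div_le_div_iff₀ hlogy (by exact_mod_cast ha)] at h
    linarith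
  rw [← log_le_log_iff (by positivity) (by positivity), log_pow, log_pow]
  exact hlog

lemma div_sub_one_le_div_sub_one {u v : ℝ} (hv : 1 < v) (huv : v ≤ u) :
    u / (u - 1) ≤ v / (v - 1) := by
  rw [div_le_div_iff₀ (by linarith) (by linarith)]
  nlinarith

lemma three_halves_le_mul_div_succ {t i : ℝ} (ht : 3 ≤ t) (hi : 1 ≤ i) :
    3 / 2 ≤ t * i / (i + 1) := by
  rw [le_div_iff₀ (by linarith)]
  nlinarith

theorem product_ratio_bound_general (a b t : ℕ) (ha : 0 < a)
    (hba : ((b : ℝ) / a) ≥ Real.log t / Real.log (((t : ℝ) - 1) / ((t : ℝ) - 2)))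
    (i : ℕ) (hi1 : 1 ≤ i) (hi2 : i ≤ t - 2) :
    (1.5 : ℝ) ^ a ≤
      ((i : ℝ) ^ a * ((t : ℝ) - i) ^ b) /
        (((i : ℝ) + 1) ^ a * ((t : ℝ) - i - 1) ^ b) := by
  have hiR : (1 : ℝ) ≤ i := by exact_mod_cast hi1
  have hitR : (i : ℝ) + 2 ≤ t := by exact_mod_cast (by omega : i + 2 ≤ t)
  have htR : (3 : ℝ) ≤ t := by linarith
  have hr : 1 < ((t : ℝ) - 1) / ((t : ℝ) - 2) := by
    rw [one_lt_div (by linarith)]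
    linarith
  have ht_pow : (t : ℝ) ^ a ≤ (((t : ℝ) - 1) / ((t : ℝ) - 2)) ^ b :=
    pow_le_pow_of_log_div_log_le (by positivity) hr ha hba
  have hmono : ((t : ℝ) - 1) / ((t : ℝ) - 2) ≤ ((t : ℝ) - i) / ((t : ℝ) - i - 1) := by
    convert div_sub_one_le_div_sub_one (u := (t : ℝ) - 1) (v := (t : ℝ) - i)
      (by linarith) (by linarith) using 2
    ring
  calc (1.5 : ℝ) ^ a
      ≤ ((t : ℝ) * i / (i + 1)) ^ a := by
        gcongr
        exact le_of_eq_of_le (by norm_num) (three_halves_le_mul_div_succ htR hiR)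
    _ = ((i : ℝ) / (i + 1)) ^ a * (t : ℝ) ^ a := by rw [← mul_pow]; ring
    _ ≤ ((i : ℝ) / (i + 1)) ^ a * (((t : ℝ) - i) / ((t : ℝ) - i - 1)) ^ b := by
        gcongr
        exact ht_pow.trans (pow_le_pow_left₀ (zero_le_one.trans hr.le) hmono b)
    _ = _ := by rw [div_pow, div_pow, div_mul_div_comm]

/-- For positive integers `a, b, t` with `t ≥ 3` and `b/a ≥ log t / log((t-1)/(t-2))`,
and every `1 ≤ i ≤ t-2`, the ratio `(i^a (t-i)^b) / ((i+1)^a (t-i-1)^b)` is at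
least `1.5^a`. -/
theorem product_ratio_bound (a b t : ℕ) (ha : 0 < a) (hb : 0 < b) (ht : 3 ≤ t)
    (hba : ((b : ℝ) / a) ≥ Real.log t / Real.log (((t : ℝ) - 1) / ((t : ℝ) - 2)))
    (i : ℕ) (hi1 : 1 ≤ i) (hi2 : i ≤ t - 2) :
    (1.5 : ℝ) ^ a ≤
      ((i : ℝ) ^ a * ((t : ℝ) - i) ^ b) /
        (((i : ℝ) + 1) ^ a * ((t : ℝ) - i - 1) ^ b) :=
  product_ratio_bound_general a b t ha hba i hi1 hi2
end

section
/- Let m, n, t, v₁ be positive integers with m ≤ n²/4 and v₁(n - v₁) ≥ m - t. Let s be the largest integer satisfying s(n - s) ≥ m. Then s ≥ v₁ - ⌈√t⌉. -/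
/-!
Let `c = ⌈√t⌉`, so `t ≤ c²`. The parabola `x ↦ x(n - x)` is symmetric about `n/2`, so the
largest `s` with `s(n - s) ≥ m` lies to the right of `n/2`. If `s < v₁ - c`, then `v₁ - c` also
lies to the right of `n/2`, and stepping from `v₁` towards the vertex by `c` gains at least `c²`:
`(v₁ - c)(n - v₁ + c) ≥ v₁(n - v₁) + c² ≥ (m - t) + t = m`, contradicting the maximality of `s`.
-/

theorem Real.le_ceil_sqrt_sq (x : ℝ) : x ≤ (⌈√x⌉ : ℝ) ^ 2 :=
  (Real.sqrt_le_iff.mp (Int.le_ceil _)).2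

section Parabola

variable {R : Type*} [CommRing R] [LinearOrder R] [IsStrictOrderedRing R]

theorem le_two_mul_of_isGreatest_mul_sub {m n s : R} (hs : IsGreatest {x | m ≤ x * (n - x)} s) :
    n ≤ 2 * s := by
  have hreflect : n - s ≤ s := hs.2 (show m ≤ (n - s) * (n - (n - s)) by
    rw [sub_sub_cancel, mul_comm]; exact hs.1)
  linarith

theorem mul_sub_add_sq_le_sub_mul_sub {n v c : R} (hc : 0 ≤ c) (hvc : n ≤ 2 * (v - c)) :
    v * (n - v) + c ^ 2 ≤ (v - c) * (n - (v - c)) := by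
  -- `(v - c) * (n - (v - c)) = v * (n - v) + c * (2 * v - n - c)`
  have hgain : c * c ≤ c * (2 * v - n - c) := mul_le_mul_of_nonneg_left (by linarith) hc
  linarith

end Parabola

theorem maxcut_size_bound_general (m n t v₁ : ℕ)
    (hv1 : (v₁ : ℤ) * ((n : ℤ) - v₁) ≥ (m : ℤ) - t)
    (s : ℤ) (hs : s * ((n : ℤ) - s) ≥ m)
    (hmax : ∀ s' : ℤ, s' * ((n : ℤ) - s') ≥ m → s' ≤ s) :
    (v₁ : ℤ) - ⌈Real.sqrt t⌉ ≤ s := by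
  set c : ℤ := ⌈Real.sqrt t⌉
  have hc : 0 ≤ c := Int.ceil_nonneg (Real.sqrt_nonneg _)
  have htc : (t : ℤ) ≤ c ^ 2 := by exact_mod_cast Real.le_ceil_sqrt_sq t
  have hhalf : (n : ℤ) ≤ 2 * s := le_two_mul_of_isGreatest_mul_sub ⟨hs, hmax⟩
  by_contra! hlt
  have hgain := mul_sub_add_sq_le_sub_mul_sub hc (show (n : ℤ) ≤ 2 * (v₁ - c) by omega)
  exact hlt.not_ge (hmax _ (by linarith))

/-- Let `m, n, t, v₁` be positive integers with `4m ≤ n²` and `v₁(n - v₁) ≥ m - t`.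
If `s` is the largest integer satisfying `s(n - s) ≥ m`, then `s ≥ v₁ - ⌈√t⌉`. -/
theorem maxcut_size_bound (m n t v₁ : ℕ) (hm : 0 < m) (hn : 0 < n) (ht : 0 < t)
    (hv : 0 < v₁) (hmn : 4 * m ≤ n ^ 2)
    (hv1 : (v₁ : ℤ) * ((n : ℤ) - v₁) ≥ (m : ℤ) - t)
    (s : ℤ) (hs : s * ((n : ℤ) - s) ≥ m)
    (hmax : ∀ s' : ℤ, s' * ((n : ℤ) - s') ≥ m → s' ≤ s) :
    (v₁ : ℤ) - ⌈Real.sqrt t⌉ ≤ s :=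
  maxcut_size_bound_general m n t v₁ hv1 s hs hmax
end

section
/- For every integer q ≥ 9, one has F_q(3) > 2·F_q(1)·(q-3)/(q-2), where F_q(x) = log(q/(q-x))·log(q/x). -/
/-!
Write `A₁ = log (q / (q - 1))`, `A₃ = log (q / (q - 3))` and `L = log q`; the claim is
`2 A₁ L (q - 3) < A₃ (L - log 3) (q - 2)`. The difference of the two sides decreases in `A₁`,
increases in `A₃` and, because `A₃ (q - 2) > 2 A₁ (q - 3)`, also in `L`; so it suffices to use
rational bounds: `A₁ ≤ (1/(q-1) + 1/q)/2` (from `x ≤ sinh x`),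
`A₃ ≥ 2x + 2x³/3` with `x = 3/(2q-3)` (atanh series), `L ≥ 2 log 3 + 2(q-9)/(q+9)` and
`0 < log 3 < 11/10`. The inequality is tight at `q = 9` (margin about 0.4%), which is why the cubic
term is needed; what remains is a rational inequality whose numerator, written in `s = q - 9`,
has only positive coefficients.
-/

open Real

namespace Real

lemma log_le_sub_inv_div_two {y : ℝ} (hy : 1 ≤ y) : log y ≤ (y - y⁻¹) / 2 := by
  rw [← sinh_log (by linarith)]
  exact self_le_sinh_iff.2 (log_nonneg hy)

lemma add_pow_three_div_three_le_half_log_div {x : ℝ} (h₀ : 0 ≤ x) (h : x < 1) :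
    x + x ^ 3 / 3 ≤ 1 / 2 * log ((1 + x) / (1 - x)) := by
  have h := sum_range_le_log_div h₀ h 2
  norm_num [Finset.sum_range_succ] at h
  linarith

lemma log_div_sub_le {q k : ℝ} (hk : 0 ≤ k) (hkq : k < q) :
    log (q / (q - k)) ≤ k * (2 * q - k) / (2 * q * (q - k)) := by
  have hqk : 0 < q - k := by linarith
  have hq : 0 < q := by linarith
  calc log (q / (q - k)) ≤ (q / (q - k) - (q / (q - k))⁻¹) / 2 :=
        log_le_sub_inv_div_two ((one_le_div hqk).2 (by linarith))
    _ = k * (2 * q - k) / (2 * q * (q - k)) := by field_simp; ring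

lemma le_log_div_sub {q k : ℝ} (hk : 0 ≤ k) (hkq : k < q) :
    2 * k / (2 * q - k) + 2 * k ^ 3 / (3 * (2 * q - k) ^ 3) ≤ log (q / (q - k)) := by
  have hqk : 0 < q - k := by linarith
  have h2qk : 0 < 2 * q - k := by linarith
  have hx1 : k / (2 * q - k) < 1 := (div_lt_one h2qk).2 (by linarith)
  have hx := add_pow_three_div_three_le_half_log_div (by positivity) hx1
  have hratio : (1 + k / (2 * q - k)) / (1 - k / (2 * q - k)) = q / (q - k) := by
    rw [div_eq_div_iff (sub_pos.2 hx1).ne' hqk.ne']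
    field_simp; ring
  rw [hratio] at hx
  calc 2 * k / (2 * q - k) + 2 * k ^ 3 / (3 * (2 * q - k) ^ 3)
      = 2 * (k / (2 * q - k) + (k / (2 * q - k)) ^ 3 / 3) := by field_simp
    _ ≤ log (q / (q - k)) := by linarith

lemma two_mul_log_three_add_le_log {q : ℝ} (hq : 9 ≤ q) :
    2 * log 3 + 2 * (q - 9) / (q + 9) ≤ log q := by
  have h := le_log_one_add_of_nonneg (x := q / 9 - 1) (by linarith)
  have hlog : log q = 2 * log 3 + log (1 + (q / 9 - 1)) := by
    rw [add_sub_cancel, log_div (by linarith) (by norm_num),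
      show (9 : ℝ) = 3 ^ 2 by norm_num, log_pow]
    push_cast; ring
  have hbound : 2 * (q / 9 - 1) / (q / 9 - 1 + 2) = 2 * (q - 9) / (q + 9) := by
    rw [div_eq_div_iff (by linarith) (by linarith)]; ring
  linarith

end Real

noncomputable def Fq (q x : ℝ) : ℝ := log (q / (q - x)) * log (q / x)

noncomputable def logRatioOneUpper (q : ℝ) : ℝ := (2 * q - 1) / (2 * q * (q - 1))

noncomputable def logRatioThreeLower (q : ℝ) : ℝ := 6 / (2 * q - 3) + 18 / (2 * q - 3) ^ 3

lemma two_mul_logRatioOneUpper_mul_lt {q : ℝ} (hq : 9 ≤ q) :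
    2 * logRatioOneUpper q * (q - 3) < logRatioThreeLower q * (q - 2) := by
  obtain ⟨s, hs, rfl⟩ : ∃ s, 0 ≤ s ∧ q = 9 + s := ⟨q - 9, by linarith, by ring⟩
  have h₁ : 2 * (9 + s) - 3 ≠ 0 := by linarith
  have h₂ : 9 + s - 1 ≠ 0 := by linarith
  have h₃ : 9 + s ≠ 0 := by linarith
  have hnum : logRatioThreeLower (9 + s) * (9 + s - 2) - 2 * logRatioOneUpper (9 + s) * (9 + s - 3)
      = (690444 + 414306 * s + 98856 * s ^ 2 + 11712 * s ^ 3 + 688 * s ^ 4 + 16 * s ^ 5)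
        / ((18 + 2 * s) * (8 + s) * (15 + 2 * s) ^ 3) := by
    unfold logRatioOneUpper logRatioThreeLower
    field_simp
    ring
  rw [← sub_pos, hnum]
  positivity

lemma logRatioBounds_margin_pos {q : ℝ} (hq : 9 ≤ q) :
    0 < 11 / 10 * (logRatioThreeLower q * (q - 2) - 4 * logRatioOneUpper q * (q - 3))
      + 2 * (q - 9) / (q + 9)
        * (logRatioThreeLower q * (q - 2) - 2 * logRatioOneUpper q * (q - 3)) := by
  obtain ⟨s, hs, rfl⟩ : ∃ s, 0 ≤ s ∧ q = 9 + s := ⟨q - 9, by linarith, by ring⟩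
  have h₁ : 2 * (9 + s) - 3 ≠ 0 := by linarith
  have h₂ : 9 + s - 1 ≠ 0 := by linarith
  have h₃ : 9 + s ≠ 0 := by linarith
  have h₄ : 9 + s + 9 ≠ 0 := by linarith
  have hnum : 11 / 10 * (logRatioThreeLower (9 + s) * (9 + s - 2)
        - 4 * logRatioOneUpper (9 + s) * (9 + s - 3))
      + 2 * (9 + s - 9) / (9 + s + 9) * (logRatioThreeLower (9 + s) * (9 + s - 2)
        - 2 * logRatioOneUpper (9 + s) * (9 + s - 3))
      = (384912 + 2575152 * s + 1787364 * s ^ 2 + 510336 * s ^ 3 + 72672 * s ^ 4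
          + 5136 * s ^ 5 + 144 * s ^ 6)
        / (10 * (18 + s) * (18 + 2 * s) * (8 + s) * (15 + 2 * s) ^ 3) := by
    unfold logRatioOneUpper logRatioThreeLower
    field_simp
    ring
  rw [hnum]
  positivity

theorem two_mul_Fq_one_mul_lt_Fq_three {q : ℝ} (hq : 9 ≤ q) :
    2 * Fq q 1 * ((q - 3) / (q - 2)) < Fq q 3 := by
  have hA₁ : log (q / (q - 1)) ≤ logRatioOneUpper q := by
    simpa [logRatioOneUpper] using log_div_sub_le zero_le_one (by linarith : (1 : ℝ) < q)
  have hA₃ : logRatioThreeLower q ≤ log (q / (q - 3)) := by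
    convert le_log_div_sub (by norm_num) (by linarith : (3 : ℝ) < q) using 1
    have : 2 * q - 3 ≠ 0 := by linarith
    unfold logRatioThreeLower; field_simp; ring
  have hL := two_mul_log_three_add_le_log hq
  have hc₀ : 0 < log 3 := log_pos (by norm_num)
  have hc₁ : log 3 < 11 / 10 := log_three_lt_d9.trans (by norm_num)
  have hD := two_mul_logRatioOneUpper_mul_lt hq
  have hE := logRatioBounds_margin_pos hq
  have hℓ : 0 ≤ 2 * (q - 9) / (q + 9) := div_nonneg (by linarith) (by linarith)
  have hL₀ : 0 ≤ log q := by linarith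
  have hLc : 0 ≤ log q - log 3 := by linarith
  have hlog3 : log (q / 3) = log q - log 3 := log_div (by linarith) (by norm_num)
  rw [Fq, Fq, div_one, hlog3, mul_div_assoc', div_lt_iff₀ (by linarith)]
  set D := logRatioThreeLower q * (q - 2) - 2 * logRatioOneUpper q * (q - 3)
  have hD₀ : 0 ≤ D := sub_nonneg.2 hD.le
  -- The goal is a linear combination of these products; the last two interpolate between the
  -- endpoints `0` and `11 / 10` of the range of `log 3`.
  linarith [mul_le_mul_of_nonneg_right hA₁ (mul_nonneg hL₀ (by linarith : (0 : ℝ) ≤ q - 3)),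
    mul_le_mul_of_nonneg_right hA₃ (mul_nonneg hLc (by linarith : (0 : ℝ) ≤ q - 2)),
    mul_le_mul_of_nonneg_right hL hD₀, mul_pos hc₀ hE,
    mul_nonneg (sub_nonneg.2 hc₁.le) (mul_nonneg hℓ hD₀)]

/-- For every integer `q ≥ 9`,
`F_q(3) > 2·F_q(1)·(q-3)/(q-2)` where `F_q(x) = log(q/(q-x))·log(q/x)`. -/
theorem Fq_three_gt (q : ℕ) (hq : 9 ≤ q) :
    Real.log ((q : ℝ) / ((q : ℝ) - 3)) * Real.log ((q : ℝ) / 3) >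
      2 * (Real.log ((q : ℝ) / ((q : ℝ) - 1)) * Real.log (q : ℝ)) *
        (((q : ℝ) - 3) / ((q : ℝ) - 2)) := by
  simpa [Fq] using two_mul_Fq_one_mul_lt_Fq_three (q := (q : ℝ)) (by exact_mod_cast hq)
end

section
/- Fix an integer q ≥ 3 and an integer a with 1 ≤ a ≤ q/2. For all reals α, β ≥ 0 with αβ ≥ 1, one has α·log(q/a) + β·log(q/(q-a)) ≥ 2·√(log(q/(q-1))·log q), with equality possible only if a = 1. -/
/-!
By AM-GM and `αβ ≥ 1`, `α A + β B ≥ 2 √(α A · β B) ≥ 2 √(A B)` for `A = log (q/a)` and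
`B = log (q/(q-a))`, so it suffices to show `A B ≥ log (q/(q-1)) · log q`, strictly for `a ≥ 2`.
This follows from two one-sided estimates: `a · log (q/a) ≥ log q`, which comes from
`a ≤ 2^(a-1)` and `q/a ≥ 2`, and `log (q/(q-a)) > a · log (q/(q-1))`, which is the strict
Bernoulli inequality `(1 - 1/q)^a > 1 - a/q` after taking logarithms.
-/

open Real

lemma two_mul_sqrt_mul_le_add_of_one_le_mul {A B α β : ℝ} (hA : 0 ≤ A) (hB : 0 ≤ B)
    (hα : 0 ≤ α) (hβ : 0 ≤ β) (hαβ : 1 ≤ α * β) :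
    2 * √(A * B) ≤ α * A + β * B := by
  have hAB : A * B ≤ (α * A) * (β * B) := by nlinarith [mul_nonneg hA hB]
  have h2 : (2 : ℝ) = √(2 ^ 2) := (sqrt_sq zero_le_two).symm
  rw [h2, ← sqrt_mul (by positivity), sqrt_le_iff]
  exact ⟨by positivity, by nlinarith [sq_nonneg (α * A - β * B)]⟩

lemma log_le_mul_log_div {Q : ℝ} {n : ℕ} (hn : 1 ≤ n) (hnQ : 2 * n ≤ Q) :
    log Q ≤ n * log (Q / n) := by
  obtain ⟨m, rfl⟩ := Nat.exists_eq_add_of_le' hn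
  have hpos : (0 : ℝ) < (m + 1 : ℕ) := by positivity
  have hQ : 0 < Q := by linarith
  have hQdiv : 2 ≤ Q / (m + 1 : ℕ) := by rw [le_div_iff₀ hpos]; linarith
  have hlog_n : log (m + 1 : ℕ) ≤ m * log 2 := by
    rw [← log_pow]
    exact log_le_log (by positivity) (by exact_mod_cast Nat.lt_two_pow_self)
  have hlog_2 : log 2 ≤ log (Q / (m + 1 : ℕ)) := log_le_log zero_lt_two hQdiv
  calc log Q = log (Q / (m + 1 : ℕ)) + log (m + 1 : ℕ) := by
        rw [log_div hQ.ne' hpos.ne']; ring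
    _ ≤ log (Q / (m + 1 : ℕ)) + m * log (Q / (m + 1 : ℕ)) := by
        gcongr; exact hlog_n.trans (by gcongr)
    _ = (m + 1 : ℕ) * log (Q / (m + 1 : ℕ)) := by push_cast; ring

lemma mul_log_div_sub_one_lt_log_div_sub {Q : ℝ} {n : ℕ} (hn : 2 ≤ n) (hnQ : n < Q) :
    n * log (Q / (Q - 1)) < log (Q / (Q - n)) := by
  have hn1 : (1 : ℝ) < n := by exact_mod_cast hn
  have hQ : 0 < Q := by linarith
  have bernoulli : 1 + n * (-1 / Q) < (1 + -1 / Q) ^ n := by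
    simpa only [rpow_natCast] using one_add_mul_self_lt_rpow_one_add
      (s := -1 / Q) (by rw [le_div_iff₀ hQ]; linarith) (by simp [hQ.ne']) hn1
  have hfrac : (Q - n) / Q < ((Q - 1) / Q) ^ n := by
    convert bernoulli using 1 <;> field_simp <;> ring
  have hlog := log_lt_log (by apply div_pos <;> linarith) hfrac
  rw [log_pow, log_div (by linarith) hQ.ne', log_div (by linarith) hQ.ne'] at hlog
  rw [log_div hQ.ne' (by linarith), log_div hQ.ne' (by linarith)]
  linarith

lemma log_div_sub_one_mul_log_lt {Q : ℝ} {n : ℕ} (hn : 2 ≤ n) (hnQ : 2 * n ≤ Q) :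
    log (Q / (Q - 1)) * log Q < log (Q / n) * log (Q / (Q - n)) := by
  have hn2 : (2 : ℝ) ≤ n := by exact_mod_cast hn
  have hB1 : 0 ≤ log (Q / (Q - 1)) := log_nonneg (by rw [le_div_iff₀] <;> linarith)
  have hA : 0 < log (Q / n) := log_pos (by rw [lt_div_iff₀] <;> linarith)
  calc log (Q / (Q - 1)) * log Q ≤ log (Q / (Q - 1)) * (n * log (Q / n)) := by
        gcongr; exact log_le_mul_log_div (by omega) hnQ
    _ = log (Q / n) * (n * log (Q / (Q - 1))) := by ring
    _ < log (Q / n) * log (Q / (Q - n)) := by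
        gcongr; exact mul_log_div_sub_one_lt_log_div_sub hn (by linarith)

theorem two_set_partition_bound_general (q a : ℕ) (ha : 1 ≤ a) (ha2 : 2 * a ≤ q) :
    (∀ α β : ℝ, 0 ≤ α → 0 ≤ β → 1 ≤ α * β →
        2 * Real.sqrt (Real.log ((q : ℝ) / ((q : ℝ) - 1)) * Real.log q) ≤
          α * Real.log ((q : ℝ) / a) + β * Real.log ((q : ℝ) / ((q : ℝ) - a))) ∧
      (∀ α β : ℝ, 0 ≤ α → 0 ≤ β → 1 ≤ α * β →
        α * Real.log ((q : ℝ) / a) + β * Real.log ((q : ℝ) / ((q : ℝ) - a)) =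
            2 * Real.sqrt (Real.log ((q : ℝ) / ((q : ℝ) - 1)) * Real.log q) →
        a = 1) := by
  have ha' : (1 : ℝ) ≤ a := by exact_mod_cast ha
  have ha2' : (2 * a : ℝ) ≤ q := by exact_mod_cast ha2
  have hA : 0 ≤ log (q / a) := log_nonneg (by rw [le_div_iff₀] <;> linarith)
  have hB : 0 ≤ log (q / (q - a)) := log_nonneg (by rw [le_div_iff₀] <;> linarith)
  have hB1L : 0 ≤ log (q / (q - 1)) * log q :=
    mul_nonneg (log_nonneg (by rw [le_div_iff₀] <;> linarith)) (log_nonneg (by linarith))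
  have hstrict (h : a ≠ 1) := log_div_sub_one_mul_log_lt (Q := q) (n := a) (by omega) ha2'
  have hle : log (q / (q - 1)) * log q ≤ log (q / a) * log (q / (q - a)) := by
    rcases eq_or_ne a 1 with rfl | h
    · simp [mul_comm]
    · exact (hstrict h).le
  refine ⟨fun α β hα hβ hαβ => ?_, fun α β hα hβ hαβ heq => ?_⟩
  · calc 2 * √(log (q / (q - 1)) * log q) ≤ 2 * √(log (q / a) * log (q / (q - a))) := by
          gcongr
      _ ≤ _ := two_mul_sqrt_mul_le_add_of_one_le_mul hA hB hα hβ hαβ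
  · by_contra h
    have := sqrt_lt_sqrt hB1L (hstrict h)
    have := two_mul_sqrt_mul_le_add_of_one_le_mul hA hB hα hβ hαβ
    linarith

/-- Fix an integer `q ≥ 3` and an integer `a` with `1 ≤ a ≤ q/2`. For all nonnegative
reals `α, β` with `αβ ≥ 1`, one has
`α·log(q/a) + β·log(q/(q-a)) ≥ 2·√(log(q/(q-1))·log q)`, with equality possible
only if `a = 1`. -/
theorem two_set_partition_bound (q a : ℕ) (hq : 3 ≤ q) (ha : 1 ≤ a) (ha2 : 2 * a ≤ q) :
    (∀ α β : ℝ, 0 ≤ α → 0 ≤ β → 1 ≤ α * β →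
        2 * Real.sqrt (Real.log ((q : ℝ) / ((q : ℝ) - 1)) * Real.log q) ≤
          α * Real.log ((q : ℝ) / a) + β * Real.log ((q : ℝ) / ((q : ℝ) - a))) ∧
      (∀ α β : ℝ, 0 ≤ α → 0 ≤ β → 1 ≤ α * β →
        α * Real.log ((q : ℝ) / a) + β * Real.log ((q : ℝ) / ((q : ℝ) - a)) =
            2 * Real.sqrt (Real.log ((q : ℝ) / ((q : ℝ) - 1)) * Real.log q) →
        a = 1) :=
  two_set_partition_bound_general q a ha ha2
end

section
/- Let k > l ≥ 0 be integers and let t be an integer with l+2 ≤ t ≤ k. Then every graph G with exactly C(k,2) + l edges contains at most C(k,t) cliques of size t. -/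
/-!
If `G` had more than `C(k, t)` cliques of size `t`, then by Kruskal–Katona their `(t - 2)`-fold
shadow would be at least as large as that of the first `C(k, t) + 1` sets of size `t` in colex
order: all `t`-subsets of `{0, …, k - 1}` together with `{0, …, t - 2, k}`. That shadow consists of
the pairs in `{0, …, k - 1}` and the `t - 1` pairs `{j, k}` with `j ≤ t - 2`, so it has
`C(k, 2) + t - 1 > C(k, 2) + l` elements; but every pair in the shadow of the cliques is an edge.
-/

open Finset FinsetFamily

namespace Finset

lemma powersetCard_inter_powersetCard {α : Type*} [DecidableEq α] (m : ℕ) (s t : Finset α) :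
    powersetCard m s ∩ powersetCard m t = powersetCard m (s ∩ t) := by
  ext u
  simp only [mem_inter, mem_powersetCard, subset_inter_iff]
  tauto

lemma powersetCard_subset_shadow_iterate {α : Type*} [DecidableEq α] {𝒜 : Finset (Finset α)}
    {s : Finset α} {i : ℕ} (hs : s ∈ 𝒜) (hi : i ≤ #s) : powersetCard (#s - i) s ⊆ ∂^[i] 𝒜 := by
  intro u hu
  rw [mem_powersetCard] at hu
  rw [mem_shadow_iterate_iff_exists_sdiff]
  exact ⟨s, hs, hu.1, by rw [card_sdiff_of_subset hu.1, hu.2]; omega⟩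

namespace Colex

variable {α : Type*} [LinearOrder α] [LocallyFiniteOrderBot α] {a b : α} {s : Finset α}

lemma subset_Iio_of_toColex_lt_insert_Iio (hba : b ≤ a) (hs : #s = #(insert a (Iio b)))
    (hlt : toColex s < toColex (insert a (Iio b))) : s ⊆ Iio a := by
  obtain ⟨x, hxS, hxs, hx⟩ := toColex_lt_toColex_iff_exists_forall_lt.1 hlt
  have hxa : x ≤ a := by
    rcases mem_insert.1 hxS with rfl | hxb
    · exact le_rfl
    · exact ((mem_Iio.1 hxb).trans_le hba).le
  by_cases has : a ∈ s
  · -- the witness `x` lies below `b`, which squeezes `s` into `insert a (Iio b)`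
    have hxb : x < b := by
      rcases mem_insert.1 hxS with rfl | hxb
      · exact absurd has hxs
      · exact mem_Iio.1 hxb
    have hsS : s ⊆ insert a (Iio b) := fun y hy ↦ by
      by_contra hyS
      exact hyS (mem_insert_of_mem (mem_Iio.2 ((hx y hy hyS).trans hxb)))
    rw [eq_of_subset_of_card_le hsS hs.ge] at hlt
    exact absurd hlt (lt_irrefl _)
  · intro y hy
    refine mem_Iio.2 (lt_of_le_of_ne ?_ fun hya ↦ has (hya ▸ hy))
    by_cases hyS : y ∈ insert a (Iio b)
    · rcases mem_insert.1 hyS with rfl | hyb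
      · exact le_rfl
      · exact ((mem_Iio.1 hyb).trans_le hba).le
    · exact (hx y hy hyS).le.trans hxa

lemma isInitSeg_insert_powersetCard_Iio (hba : b ≤ a) {r : ℕ} (hr : #(insert a (Iio b)) = r) :
    IsInitSeg (insert (insert a (Iio b)) (powersetCard r (Iio a))) r := by
  refine ⟨?_, fun A B hA ⟨hBA, hB⟩ ↦ mem_insert_of_mem (mem_powersetCard.2 ⟨?_, hB⟩)⟩
  · intro A hA
    rcases mem_insert.1 hA with rfl | hA
    · exact hr
    · exact (mem_powersetCard.1 hA).2
  rcases mem_insert.1 hA with rfl | hA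
  · exact subset_Iio_of_toColex_lt_insert_Iio hba (hB.trans hr.symm) hBA
  · exact fun y hy ↦ mem_Iio.2 <| forall_lt_mono hBA.le
      (fun x hx ↦ mem_Iio.1 ((mem_powersetCard.1 hA).1 hx)) y hy

end Colex

theorem choose_add_choose_le_card_shadow_iterate {n k t i : ℕ} {𝒜 : Finset (Finset (Fin n))}
    (hkn : k < n) (hit : i < t) (htk : t ≤ k) (h𝒜 : (𝒜 : Set (Finset (Fin n))).Sized t)
    (hcard : k.choose t < #𝒜) :
    k.choose (t - i) + (t - 1).choose (t - 1 - i) ≤ #(∂^[i] 𝒜) := by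
  obtain ⟨a, ha⟩ : ∃ a : Fin n, (a : ℕ) = k := ⟨⟨k, hkn⟩, rfl⟩
  obtain ⟨b, hb⟩ : ∃ b : Fin n, (b : ℕ) = t - 1 := ⟨⟨t - 1, by omega⟩, rfl⟩
  have hba : b ≤ a := Fin.le_def.2 (by omega)
  have haS : a ∉ Iio b := by rw [mem_Iio, Fin.lt_def]; omega
  have hS : #(insert a (Iio b)) = t := by rw [card_insert_of_notMem haS, Fin.card_Iio]; omega
  -- the colex initial segment of `t`-sets of size `C(k, t) + 1`
  have h𝒞 : #(insert (insert a (Iio b)) (powersetCard t (Iio a))) = k.choose t + 1 := by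
    rw [card_insert_of_notMem fun h ↦ by simpa using (mem_powersetCard.1 h).1 (mem_insert_self a _),
      card_powersetCard, Fin.card_Iio, ha]
  have hKK := iterated_kk (k := i) h𝒜 (h𝒞 ▸ hcard) (Colex.isInitSeg_insert_powersetCard_Iio hba hS)
  set 𝒞 := insert (insert a (Iio b)) (powersetCard t (Iio a))
  have hlow : powersetCard (t - i) (Iio a) ⊆ ∂^[i] 𝒞 := by
    intro u hu
    rw [mem_powersetCard] at hu
    obtain ⟨s, hus, hsa, hs⟩ := exists_subsuperset_card_eq hu.1 (n := t) (by omega)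
      (by rw [Fin.card_Iio]; omega)
    refine powersetCard_subset_shadow_iterate (mem_insert_of_mem (mem_powersetCard.2 ⟨hsa, hs⟩))
      (by omega) (mem_powersetCard.2 ⟨hus, ?_⟩)
    rw [hs, hu.2]
  have hhigh : powersetCard (t - i) (insert a (Iio b)) ⊆ ∂^[i] 𝒞 :=
    hS ▸ powersetCard_subset_shadow_iterate (mem_insert_self _ _) (by omega)
  have hunion := card_union_add_card_inter (powersetCard (t - i) (Iio a))
    (powersetCard (t - i) (insert a (Iio b)))
  rw [powersetCard_inter_powersetCard, inter_insert_of_notMem (by simp),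
    inter_eq_right.2 (Iio_subset_Iio hba), card_powersetCard, card_powersetCard,
    card_powersetCard, Fin.card_Iio, Fin.card_Iio, hS, ha, hb] at hunion
  have hpascal : t.choose (t - i) = (t - 1).choose (t - 1 - i) + (t - 1).choose (t - i) := by
    obtain ⟨u, rfl⟩ : ∃ u, t = u + 1 := ⟨t - 1, by omega⟩
    rw [show u + 1 - i = (u - i) + 1 by omega, Nat.choose_succ_succ']
    simp
  calc k.choose (t - i) + (t - 1).choose (t - 1 - i)
      = #(powersetCard (t - i) (Iio a) ∪ powersetCard (t - i) (insert a (Iio b))) := by omega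
    _ ≤ #(∂^[i] 𝒞) := card_le_card (union_subset hlow hhigh)
    _ ≤ #(∂^[i] 𝒜) := hKK

end Finset

namespace SimpleGraph

variable {V : Type*} [Fintype V] [DecidableEq V] (G : SimpleGraph V) [DecidableRel G.Adj]

lemma shadow_iterate_cliqueFinset_subset (t i : ℕ) :
    ∂^[i] (G.cliqueFinset t) ⊆ G.cliqueFinset (t - i) := by
  intro s hs
  obtain ⟨u, hu, hsu, hsu_card⟩ := mem_shadow_iterate_iff_exists_sdiff.1 hs
  have hu := mem_cliqueFinset_iff.1 hu
  refine mem_cliqueFinset_iff.2 ⟨hu.isClique.subset (by exact_mod_cast hsu), ?_⟩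
  rw [card_sdiff_of_subset hsu, hu.card_eq] at hsu_card
  have := hu.card_eq ▸ card_le_card hsu
  omega

lemma card_cliqueFinset_two_le_card_edgeFinset : #(G.cliqueFinset 2) ≤ #G.edgeFinset := by
  refine card_le_card_of_surjOn Sym2.toFinset fun s hs ↦ ?_
  obtain ⟨hs, hs_card⟩ := mem_cliqueFinset_iff.1 hs
  obtain ⟨x, y, hxy, rfl⟩ := card_eq_two.1 hs_card
  exact ⟨s(x, y), by simpa using hs (by simp) (by simp) hxy, Sym2.toFinset_mk_eq⟩

end SimpleGraph

theorem clique_count_bound_general (V : Type*) [Fintype V] [DecidableEq V]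
    (G : SimpleGraph V) [DecidableRel G.Adj] (k l t : ℕ)
    (ht1 : l + 2 ≤ t) (ht2 : t ≤ k)
    (he : G.edgeFinset.card = Nat.choose k 2 + l) :
    (G.cliqueFinset t).card ≤ Nat.choose k t := by
  by_contra! hlt
  obtain hVk | hkV := le_or_gt (Fintype.card V) k
  · exact hlt.not_ge (G.card_cliqueFinset_le.trans (Nat.choose_le_choose t hVk))
  let H := G.map (Fintype.equivFin V).toEmbedding
  have hshadow := choose_add_choose_le_card_shadow_iterate (i := t - 2) (𝒜 := H.cliqueFinset t)
    hkV (by omega) ht2 (fun s hs ↦ (SimpleGraph.mem_cliqueFinset_iff.1 hs).card_eq)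
    (by simpa [H] using hlt)
  have hedges := (card_le_card (H.shadow_iterate_cliqueFinset_subset t (t - 2))).trans
    (by simpa [show t - (t - 2) = 2 by omega] using H.card_cliqueFinset_two_le_card_edgeFinset)
  rw [SimpleGraph.card_edgeFinset_map, he] at hedges
  rw [show t - (t - 2) = 2 by omega, show t - 1 - (t - 2) = 1 by omega,
    Nat.choose_one_right] at hshadow
  omega

/-- Let `k > l ≥ 0` be integers and `t` an integer with `l+2 ≤ t ≤ k`. Then every graph
with exactly `C(k,2) + l` edges contains at most `C(k,t)` cliques of size `t`. -/
theorem clique_count_bound (V : Type*) [Fintype V] [DecidableEq V]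
    (G : SimpleGraph V) [DecidableRel G.Adj] (k l t : ℕ) (hkl : l < k)
    (ht1 : l + 2 ≤ t) (ht2 : t ≤ k)
    (he : G.edgeFinset.card = Nat.choose k 2 + l) :
    (G.cliqueFinset t).card ≤ Nat.choose k t :=
  clique_count_bound_general V G k l t ht1 ht2 he
end
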